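/- The Okada monoid O_N is aperiodic: there exists an integer K such that m^K = m^{K+1} for every element m of O_N. -/

import Mathlib

/-- The defining relations of the Okada monoid on `n` generators `e_1, …, e_n`
(indexed by `Fin n`, with `i : Fin n` standing for `e_{i+1}`):
`e_i² = e_i`, `e_i e_j = e_j e_i` for `|i - j| ≥ 2`, and `e_{i+1} e_i e_{i+1} = e_{i+1}`. -/
inductive OkadaRel (n : ℕ) : FreeMonoid (Fin n) → FreeMonoid (Fin n) → Prop
  | idem (i : Fin n) : OkadaRel n (.of i * .of i) (.of i)
  | comm (i j : Fin n) (h : (i : ℕ) + 2 ≤ (j : ℕ)) :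
      OkadaRel n (.of i * .of j) (.of j * .of i)
  | braid (i j : Fin n) (h : (j : ℕ) = (i : ℕ) + 1) :
      OkadaRel n (.of j * .of i * .of j) (.of j)

/-- The Okada monoid on `n` generators: the free monoid on `n` generators modulo the
congruence generated by the Okada relations.  The Okada monoid `O_N` of the paper is
`OkadaMonoid (N - 1)`. -/
def OkadaMonoid (n : ℕ) := (conGen (OkadaRel n)).Quotient

instance (n : ℕ) : Monoid (OkadaMonoid n) :=
  inferInstanceAs (Monoid (conGen (OkadaRel n)).Quotient)

/-- The generator `e_{i+1}` of the Okada monoid. -/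
def okadaGen (n : ℕ) (i : Fin n) : OkadaMonoid n :=
  (conGen (OkadaRel n)).mk' (FreeMonoid.of i)

/-- The generator `e_a` (`1`-indexed) of the Okada monoid, or `1` if out of range. -/
def okadaGenN (n : ℕ) (a : ℕ) : OkadaMonoid n :=
  if h : a - 1 < n then okadaGen n ⟨a - 1, h⟩ else 1

/-!
Let `M k` be the submonoid generated by `e_i` with `i < k`. For `x ∈ M t`, one has
`e_t x e_t = e_t y` with `y ∈ M (t - 1)`: the letters below `t - 1` commute with `e_t`, and an
occurrence of `e_{t-1}` is absorbed by `e_t e_{t-1} e_t = e_t`. Hence every element of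
`M (t + 1)` lies in `M t` or in `M t · e_t · M t`, and `(a e_t b)^(m+1) = a e_t y^m b` with
`e_t (b a) e_t = e_t y`. Induction on `k` then gives `x^k = x^(k+1)` on `M k`.
-/

theorem mem_or_exists_mul_mul_of_mem_closure_insert {M : Type*} [Monoid M] {S : Submonoid M}
    {e : M} (he : ∀ x ∈ S, ∃ y ∈ S, e * x * e = e * y) {x : M}
    (hx : x ∈ Submonoid.closure (insert e (S : Set M))) :
    x ∈ S ∨ ∃ a ∈ S, ∃ b ∈ S, x = a * e * b := by
  induction hx using Submonoid.closure_induction with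
  | mem x hx =>
    rcases hx with rfl | hx
    · exact .inr ⟨1, S.one_mem, 1, S.one_mem, by simp⟩
    · exact .inl hx
  | one => exact .inl S.one_mem
  | mul x z _ _ hx hz =>
    rcases hx with hx | ⟨a, ha, b, hb, rfl⟩ <;> rcases hz with hz | ⟨c, hc, d, hd, rfl⟩
    · exact .inl (S.mul_mem hx hz)
    · exact .inr ⟨x * c, S.mul_mem hx hc, d, hd, by simp only [mul_assoc]⟩
    · exact .inr ⟨a, ha, b * z, S.mul_mem hb hz, by simp only [mul_assoc]⟩
    · obtain ⟨y, hy, hbc⟩ := he (b * c) (S.mul_mem hb hc)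
      refine .inr ⟨a, ha, y * d, S.mul_mem hy hd, ?_⟩
      calc a * e * b * (c * e * d) = a * (e * (b * c) * e) * d := by simp only [mul_assoc]
        _ = a * e * (y * d) := by rw [hbc]; simp only [mul_assoc]

theorem pow_succ_mul_mul_eq {M : Type*} [Monoid M] {a b e y : M} (h : e * (b * a) * e = e * y)
    (m : ℕ) : (a * e * b) ^ (m + 1) = a * e * y ^ m * b := by
  induction m with
  | zero => simp
  | succ m ih =>
    calc (a * e * b) ^ (m + 1 + 1) = a * (e * (b * a) * e) * y ^ m * b := by
          rw [pow_succ', ih]; simp only [mul_assoc]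
      _ = a * e * y ^ (m + 1) * b := by rw [h, pow_succ']; simp only [mul_assoc]

theorem pow_eq_pow_succ_of_le {M : Type*} [Monoid M] {y : M} {k m : ℕ} (h : y ^ k = y ^ (k + 1))
    (hkm : k ≤ m) : y ^ m = y ^ (m + 1) := by
  obtain ⟨d, rfl⟩ := Nat.exists_eq_add_of_le hkm
  rw [pow_add, h, ← pow_add, Nat.add_right_comm]

theorem mul_mul_eq_of_commute_of_mul_self {M : Type*} [Monoid M] {e x : M} (hx : Commute x e)
    (he : e * e = e) : e * x * e = e * x := by
  rw [mul_assoc, hx.eq, ← mul_assoc, he]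

theorem mul_mul_mul_mul_eq_of_commute {M : Type*} [Monoid M] {a b e f : M} (ha : Commute a e)
    (hb : Commute b e) (h : e * f * e = e) : e * (a * f * b) * e = e * (a * b) := by
  calc e * (a * f * b) * e = a * (e * f * e) * b := by
        rw [← mul_assoc, ← mul_assoc, ← ha.eq, mul_assoc _ b, hb.eq]; simp only [mul_assoc]
    _ = e * (a * b) := by rw [h, ha.eq, mul_assoc]

namespace OkadaMonoid

variable {n : ℕ}

theorem okadaGen_mul_self (i : Fin n) : okadaGen n i * okadaGen n i = okadaGen n i :=
  (map_mul (PresentedMonoid.mk (OkadaRel n)) _ _).symm.trans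
    (PresentedMonoid.mk_eq_mk_of_rel (.idem i))

theorem commute_okadaGen {i j : Fin n} (h : (i : ℕ) + 2 ≤ j) :
    Commute (okadaGen n i) (okadaGen n j) :=
  (map_mul (PresentedMonoid.mk (OkadaRel n)) _ _).symm.trans
    ((PresentedMonoid.mk_eq_mk_of_rel (.comm i j h)).trans (map_mul _ _ _))

theorem okadaGen_mul_okadaGen_mul_okadaGen {i j : Fin n} (h : (j : ℕ) = i + 1) :
    okadaGen n j * okadaGen n i * okadaGen n j = okadaGen n j :=
  (map_mul (PresentedMonoid.mk (OkadaRel n)) _ _).symm.trans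
    (PresentedMonoid.mk_eq_mk_of_rel (.braid i j h))

theorem closure_range_okadaGen : Submonoid.closure (Set.range (okadaGen n)) = ⊤ :=
  PresentedMonoid.closure_range_of (OkadaRel n)

def lowerSubmonoid (n k : ℕ) : Submonoid (OkadaMonoid n) :=
  Submonoid.closure (okadaGen n '' {i | (i : ℕ) < k})

theorem okadaGen_mem_lowerSubmonoid {i : Fin n} {k : ℕ} (h : (i : ℕ) < k) :
    okadaGen n i ∈ lowerSubmonoid n k :=
  Submonoid.subset_closure ⟨i, h, rfl⟩

theorem lowerSubmonoid_mono {k l : ℕ} (h : k ≤ l) : lowerSubmonoid n k ≤ lowerSubmonoid n l :=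
  Submonoid.closure_mono (Set.image_mono fun _ hi => lt_of_lt_of_le hi h)

theorem lowerSubmonoid_zero : lowerSubmonoid n 0 = ⊥ := by
  simp [lowerSubmonoid]

theorem lowerSubmonoid_self : lowerSubmonoid n n = ⊤ := by
  simpa [lowerSubmonoid] using closure_range_okadaGen

theorem commute_okadaGen_of_mem_lowerSubmonoid {k : ℕ} {t : Fin n} (ht : k + 1 ≤ t)
    {x : OkadaMonoid n} (hx : x ∈ lowerSubmonoid n k) : Commute x (okadaGen n t) := by
  refine (Submonoid.mem_centralizer_iff.mp (Submonoid.closure_le.mpr ?_ hx) _ rfl).symm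
  rintro _ ⟨i, hi, rfl⟩
  refine Submonoid.mem_centralizer_iff.mpr ?_
  rintro _ rfl
  exact (commute_okadaGen (by have : (i : ℕ) < k := hi; omega)).symm.eq

theorem lowerSubmonoid_succ_le (t : Fin n) :
    lowerSubmonoid n (t + 1) ≤ Submonoid.closure (insert (okadaGen n t) (lowerSubmonoid n t)) := by
  refine Submonoid.closure_le.mpr ?_
  rintro _ ⟨i, hi, rfl⟩
  refine Submonoid.subset_closure ?_
  rcases (Nat.lt_succ_iff_lt_or_eq.mp hi) with hi | hi
  · exact Set.mem_insert_of_mem _ (okadaGen_mem_lowerSubmonoid hi)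
  · exact Fin.ext hi ▸ Set.mem_insert _ _

mutual

theorem okadaGen_mul_mul_okadaGen (t : Fin n) {x : OkadaMonoid n}
    (hx : x ∈ lowerSubmonoid n t) :
    ∃ y ∈ lowerSubmonoid n (t - 1), okadaGen n t * x * okadaGen n t = okadaGen n t * y :=
  match t with
  | ⟨0, _⟩ => by
    rw [lowerSubmonoid_zero, Submonoid.mem_bot] at hx
    exact ⟨1, Submonoid.one_mem _, by simp [hx, okadaGen_mul_self]⟩
  | ⟨s + 1, ht⟩ => by
    rcases mem_lowerSubmonoid_succ ⟨s, by omega⟩ hx with hx | ⟨a, ha, b, hb, rfl⟩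
    · exact ⟨x, hx, mul_mul_eq_of_commute_of_mul_self
        (commute_okadaGen_of_mem_lowerSubmonoid le_rfl hx) (okadaGen_mul_self _)⟩
    · exact ⟨a * b, Submonoid.mul_mem _ ha hb, mul_mul_mul_mul_eq_of_commute
        (commute_okadaGen_of_mem_lowerSubmonoid le_rfl ha)
        (commute_okadaGen_of_mem_lowerSubmonoid le_rfl hb)
        (okadaGen_mul_okadaGen_mul_okadaGen rfl)⟩
termination_by 2 * (t : ℕ)

theorem mem_lowerSubmonoid_succ (t : Fin n) {x : OkadaMonoid n}
    (hx : x ∈ lowerSubmonoid n (t + 1)) :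
    x ∈ lowerSubmonoid n t ∨
      ∃ a ∈ lowerSubmonoid n t, ∃ b ∈ lowerSubmonoid n t, x = a * okadaGen n t * b :=
  mem_or_exists_mul_mul_of_mem_closure_insert
    (fun _ hx => (okadaGen_mul_mul_okadaGen t hx).imp fun _ ⟨hy, h⟩ =>
      ⟨lowerSubmonoid_mono (Nat.sub_le _ 1) hy, h⟩)
    (lowerSubmonoid_succ_le t hx)
termination_by 2 * (t : ℕ) + 1

end

theorem pow_eq_pow_succ_of_mem_lowerSubmonoid :
    ∀ {k : ℕ}, k ≤ n → ∀ {x : OkadaMonoid n}, x ∈ lowerSubmonoid n k → x ^ k = x ^ (k + 1)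
  | 0, _, x, hx => by
    rw [lowerSubmonoid_zero, Submonoid.mem_bot] at hx
    simp [hx]
  | j + 1, hk, x, hx => by
    rcases mem_lowerSubmonoid_succ ⟨j, hk⟩ hx with hx | ⟨a, ha, b, hb, rfl⟩
    · exact pow_eq_pow_succ_of_le (pow_eq_pow_succ_of_mem_lowerSubmonoid (by omega) hx)
        j.le_succ
    · obtain ⟨y, hy, hbay⟩ := okadaGen_mul_mul_okadaGen ⟨j, hk⟩ (Submonoid.mul_mem _ hb ha)
      have hyj : y ^ j = y ^ (j + 1) := pow_eq_pow_succ_of_le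
        (pow_eq_pow_succ_of_mem_lowerSubmonoid (by omega) hy) (Nat.sub_le j 1)
      rw [pow_succ_mul_mul_eq hbay, pow_succ_mul_mul_eq hbay, hyj]

end OkadaMonoid

/-- The Okada monoid `O_N` is aperiodic: there is a `K` with `m^K = m^(K+1)` for every
element `m`. -/
theorem okadaMonoid_aperiodic (N : ℕ) :
    ∃ K : ℕ, ∀ m : OkadaMonoid (N - 1), m ^ K = m ^ (K + 1) :=
  ⟨N - 1, fun m => OkadaMonoid.pow_eq_pow_succ_of_mem_lowerSubmonoid le_rfl
    (OkadaMonoid.lowerSubmonoid_self ▸ Submonoid.mem_top m)⟩
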